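/- For every integer n ≥ 1, the following identity holds in ℤ[x]: the sum over all Stirling permutations σ of order n of x^{ap(σ)} equals the sum over all permutations π ∈ S_n of x^{asc(π)} 2^{n − lrmin(π)}. -/

import Mathlib

open Finset

section Defs

variable {m : ℕ} {α : Type*}

def lrminFilter [LinearOrder α] (f : Fin m → α) : Finset (Fin m) :=
  univ.filter fun i => ∀ j, j < i → f i < f j

def lrminCount [LinearOrder α] (f : Fin m → α) : ℕ :=
  (lrminFilter f).card

def lrminSet [LinearOrder α] [DecidableEq α] (f : Fin m → α) : Finset α :=
  (lrminFilter f).image f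

def ascFilter [LinearOrder α] (f : Fin m → α) : Finset (Fin m) :=
  univ.filter fun i => ∃ j : Fin m, (j : ℕ) + 1 = (i : ℕ) ∧ f j < f i

def ascCount [LinearOrder α] (f : Fin m → α) : ℕ :=
  (ascFilter f).card

def ascSet [LinearOrder α] [DecidableEq α] (f : Fin m → α) : Finset α :=
  (ascFilter f).image f

def apFilter [LinearOrder α] (f : Fin m → α) : Finset (Fin m) :=
  univ.filter fun i =>
    ∃ j k : Fin m, (j : ℕ) + 1 = (i : ℕ) ∧ (i : ℕ) + 1 = (k : ℕ) ∧ f j < f i ∧ f i = f k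

def apCount [LinearOrder α] (f : Fin m → α) : ℕ := (apFilter f).card

def apSet [LinearOrder α] [DecidableEq α] (f : Fin m → α) : Finset α := (apFilter f).image f

def evenFilter [DecidableEq α] (f : Fin m → α) : Finset (Fin m) :=
  univ.filter fun p => (p : ℕ) % 2 = 1 ∧ ∀ q, q < p → f q ≠ f p

def evenCount [DecidableEq α] (f : Fin m → α) : ℕ := (evenFilter f).card

def evenSet [DecidableEq α] (f : Fin m → α) : Finset α := (evenFilter f).image f

def desrlminCount [LinearOrder α] (f : Fin m → α) : ℕ :=
  (univ.filter fun i : Fin m =>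
    (∃ j : Fin m, (j : ℕ) + 1 = (i : ℕ) ∧ f i < f j) ∨ ∀ j, i < j → f i < f j).card

def isLRminPos [LinearOrder α] (f : Fin m → α) (i : Fin m) : Prop :=
  ∀ j, j < i → f i < f j

instance [LinearOrder α] (f : Fin m → α) : DecidablePred (isLRminPos f) := fun i => by
  unfold isLRminPos; infer_instance

def bk2Count [LinearOrder α] (f : Fin m → α) : ℕ :=
  (univ.filter fun i : Fin m =>
    isLRminPos f i ∧ (i : ℕ) + 1 < m ∧
      (∀ j : Fin m, (j : ℕ) = (i : ℕ) + 1 → ¬ isLRminPos f j) ∧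
      (∀ j : Fin m, (j : ℕ) = (i : ℕ) + 2 → isLRminPos f j)).card

end Defs

def IsStirling (n : ℕ) (f : Fin (2 * n) → Fin n) : Prop :=
  (∀ k : Fin n, (univ.filter fun p => f p = k).card = 2) ∧
    ∀ p q r : Fin (2 * n), p < q → q < r → f p = f r → f p < f q

instance (n : ℕ) : DecidablePred (IsStirling n) := fun f => by
  unfold IsStirling; infer_instance

def stirlingFinset (n : ℕ) : Finset (Fin (2 * n) → Fin n) :=
  univ.filter (IsStirling n)

def markedPerms (n : ℕ) : Finset (Equiv.Perm (Fin n) × Finset (Fin n)) :=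
  univ.filter fun pm => ∀ v ∈ pm.2, v ∉ lrminSet (⇑pm.1)

open Polynomial

/-!
Both sides satisfy `P (n + 1) = Φₙ (P n)` for the linear operator `Φₙ = insertionOp n`,
`Φₙ P = (1 + 2 n X) P + 2 X (1 - X) P'`, which sends `X ^ c` to
`(2 c + 1) X ^ c + 2 (n - c) X ^ (c + 1)`, and both equal `1` for `n = 0`.

Every Stirling permutation of order `n + 1` arises exactly once by inserting the adjacent pair of
largest letters into one of the `2 n + 1` gaps of a Stirling permutation `σ` of order `n`. This
keeps `ap` at the front and at the two gaps around the first letter of each ascent plateau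
(`2 ap σ + 1` gaps), and raises it by one at the other `2 n - 2 ap σ` gaps.

Every permutation of `n + 1` letters arises exactly once by inserting the largest letter into one
of the `n + 1` gaps of a permutation `π` of `n` letters. This keeps `asc` at the front and just
before the top of each ascent (`asc π + 1` gaps) and raises it by one elsewhere; the factor
`2 ^ (n - lrmin)` doubles except at the front, where the new letter is a new left-to-right
minimum. Summing gives `2 ^ (n - lrmin π) Φₙ (X ^ asc π)`.
-/

section InsertRun

variable {α : Type*} {m k : ℕ}

def skipRun (k : ℕ) (g : Fin (m + 1)) (i : Fin m) : Fin (m + k) :=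
  ⟨if (i : ℕ) < g then i else i + k, by have := i.isLt; split <;> omega⟩

def runPos (k : ℕ) (g : Fin (m + 1)) (j : Fin k) : Fin (m + k) :=
  ⟨g + j, by have := g.isLt; have := j.isLt; omega⟩

/-- `f` with `k` copies of `N` inserted after its first `g` letters; the copies land at the
positions `runPos k g` and the letters of `f` at the positions `skipRun k g`. -/
def insertRun (k : ℕ) (f : Fin m → α) (N : α) (g : Fin (m + 1)) (p : Fin (m + k)) : α :=
  if h : (p : ℕ) < g then f ⟨p, by have := g.isLt; omega⟩
  else if h' : (p : ℕ) < g + k then N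
  else f ⟨p - k, by have := p.isLt; omega⟩

variable (f : Fin m → α) (N : α) (g : Fin (m + 1))

lemma skipRun_val (i : Fin m) :
    (skipRun k g i : ℕ) = if (i : ℕ) < g then (i : ℕ) else i + k := rfl

lemma insertRun_of_lt {p : Fin (m + k)} (hp : (p : ℕ) < g) :
    insertRun k f N g p = f ⟨p, by have := g.isLt; omega⟩ := dif_pos hp

lemma insertRun_of_mem_run {p : Fin (m + k)} (h₁ : (g : ℕ) ≤ p) (h₂ : (p : ℕ) < g + k) :
    insertRun k f N g p = N := by
  rw [insertRun, dif_neg (by omega), dif_pos h₂]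

lemma insertRun_of_le {p : Fin (m + k)} (hp : (g : ℕ) + k ≤ p) :
    insertRun k f N g p = f ⟨p - k, by have := p.isLt; omega⟩ := by
  rw [insertRun, dif_neg (by omega), dif_neg (by omega)]

@[simp] lemma insertRun_runPos (j : Fin k) : insertRun k f N g (runPos k g j) = N :=
  insertRun_of_mem_run f N g (by simp [runPos]) (by simp [runPos])

@[simp] lemma insertRun_skipRun (i : Fin m) : insertRun k f N g (skipRun k g i) = f i := by
  have hi := i.isLt
  by_cases h : (i : ℕ) < g
  · rw [insertRun_of_lt f N g (by simp [skipRun_val, h])]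
    congr 1; ext; simp [skipRun_val, h]
  · rw [insertRun_of_le f N g (by simp [skipRun_val, h]; omega)]
    congr 1; ext; simp [skipRun_val, h]

lemma strictMono_skipRun : StrictMono (skipRun (m := m) k g) := by
  intro i j h
  rw [Fin.lt_def, skipRun_val, skipRun_val]
  rw [Fin.lt_def] at h
  split_ifs <;> omega

lemma bijective_runPos_skipRun : Function.Bijective (Sum.elim (runPos k g) (skipRun k g)) := by
  rw [Fintype.bijective_iff_injective_and_card]
  refine ⟨?_, by simp [add_comm]⟩
  rintro (a | a) (b | b) h <;>
    simp only [Sum.elim_inl, Sum.elim_inr, runPos, Fin.ext_iff, skipRun_val, Sum.inl.injEq,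
      Sum.inr.injEq, reduceCtorEq] at h ⊢ <;>
    first | omega | split_ifs at h <;> omega

lemma eq_runPos_or_eq_skipRun (p : Fin (m + k)) :
    (∃ j, p = runPos k g j) ∨ ∃ i, p = skipRun k g i := by
  obtain ⟨j | i, rfl⟩ := (bijective_runPos_skipRun g).surjective p
  exacts [.inl ⟨j, rfl⟩, .inr ⟨i, rfl⟩]

lemma sum_eq_sum_runPos_add_sum_skipRun {M : Type*} [AddCommMonoid M] (h : Fin (m + k) → M) :
    ∑ p, h p = ∑ j, h (runPos k g j) + ∑ i, h (skipRun k g i) := by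
  rw [← Fintype.sum_bijective _ (bijective_runPos_skipRun g) (h ∘ _) h (fun _ => rfl),
    Fintype.sum_sum_type]
  rfl

lemma card_eq_card_runPos_add_card_skipRun (S : Finset (Fin (m + k))) :
    S.card
      = (univ.filter (runPos k g · ∈ S)).card + (univ.filter (skipRun k g · ∈ S)).card := by
  have h := sum_eq_sum_runPos_add_sum_skipRun g (fun p => if p ∈ S then 1 else 0)
  rw [← card_filter, ← card_filter, ← card_filter] at h
  simpa using h

end InsertRun

section InsertRunFresh

variable {α : Type*} {m k : ℕ} {f : Fin m → α} {N : α} (hf : ∀ i, f i ≠ N)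
include hf

lemma insertRun_eq_iff (g : Fin (m + 1)) (p : Fin (m + k)) :
    insertRun k f N g p = N ↔ (g : ℕ) ≤ p ∧ (p : ℕ) < g + k := by
  refine ⟨fun hp => ?_, fun hp => insertRun_of_mem_run f N g hp.1 hp.2⟩
  obtain ⟨j, rfl⟩ | ⟨i, rfl⟩ := eq_runPos_or_eq_skipRun g p
  · simp [runPos]
  · simp [hf] at hp

lemma insertRun_inj (hk : 0 < k) {f' : Fin m → α} (hf' : ∀ i, f' i ≠ N) {g g' : Fin (m + 1)}
    (h : insertRun k f N g = insertRun k f' N g') : f = f' ∧ g = g' := by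
  have hg : g = g' := by
    have h₁ := (insertRun_eq_iff hf' g' (runPos k g ⟨0, hk⟩)).1 (by rw [← h]; simp)
    have h₂ := (insertRun_eq_iff hf g (runPos k g' ⟨0, hk⟩)).1 (by rw [h]; simp)
    simp only [runPos] at h₁ h₂
    omega
  subst hg
  exact ⟨funext fun i => by simpa using congrFun h (skipRun k g i), rfl⟩

lemma insertRun_one_injective (hinj : Function.Injective f) (g : Fin (m + 1)) :
    Function.Injective (insertRun 1 f N g) := by
  intro p q h
  obtain ⟨j, rfl⟩ | ⟨i, rfl⟩ := eq_runPos_or_eq_skipRun g p <;>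
    obtain ⟨j', rfl⟩ | ⟨i', rfl⟩ := eq_runPos_or_eq_skipRun g q <;>
    simp only [insertRun_runPos, insertRun_skipRun] at h
  · rw [Subsingleton.elim j j']
  · exact absurd h.symm (hf i')
  · exact absurd h (hf i)
  · rw [hinj h]

lemma card_filter_insertRun_eq [DecidableEq α] (g : Fin (m + 1)) (v : α) :
    (univ.filter (insertRun k f N g · = v)).card
      = (univ.filter (f · = v)).card + if v = N then k else 0 := by
  rw [card_eq_card_runPos_add_card_skipRun g, add_comm]
  simp only [mem_filter, mem_univ, true_and, insertRun_runPos, insertRun_skipRun]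
  split_ifs with hv
  · subst hv; simp [hf]
  · simp [Ne.symm hv]

end InsertRunFresh

lemma eq_insertRun_of_eq_iff {α : Type*} {m k : ℕ} {N : α} (g : Fin (m + 1))
    (w : Fin (m + k) → α) (hw : ∀ p, w p = N ↔ (g : ℕ) ≤ p ∧ (p : ℕ) < g + k) :
    w = insertRun k (w ∘ skipRun k g) N g := by
  funext p
  obtain ⟨j, rfl⟩ | ⟨i, rfl⟩ := eq_runPos_or_eq_skipRun g p
  · rw [insertRun_runPos, hw]
    simp [runPos]
  · simp

section Adjacency

variable {m k : ℕ} (g : Fin (m + 1))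

lemma exists_iff_runPos_or_skipRun (P : Fin (m + k) → Prop) :
    (∃ p, P p) ↔ (∃ j, P (runPos k g j)) ∨ ∃ i, P (skipRun k g i) := by
  refine ⟨fun ⟨p, hp⟩ => ?_, fun h => ?_⟩
  · obtain ⟨j, rfl⟩ | ⟨i, rfl⟩ := eq_runPos_or_eq_skipRun g p
    exacts [.inl ⟨j, hp⟩, .inr ⟨i, hp⟩]
  · obtain ⟨j, hj⟩ | ⟨i, hi⟩ := h
    exacts [⟨_, hj⟩, ⟨_, hi⟩]

lemma forall_iff_runPos_and_skipRun (P : Fin (m + k) → Prop) :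
    (∀ p, P p) ↔ (∀ j, P (runPos k g j)) ∧ ∀ i, P (skipRun k g i) := by
  refine ⟨fun h => ⟨fun j => h _, fun i => h _⟩, fun h p => ?_⟩
  obtain ⟨j, rfl⟩ | ⟨i, rfl⟩ := eq_runPos_or_eq_skipRun g p
  exacts [h.1 j, h.2 i]

lemma skipRun_lt_runPos_iff (i : Fin m) (j : Fin k) :
    skipRun k g i < runPos k g j ↔ (i : ℕ) < g := by
  simp only [Fin.lt_def, skipRun_val, runPos]; split_ifs <;> omega

lemma runPos_lt_runPos_iff (j j' : Fin k) : runPos k g j < runPos k g j' ↔ j < j' := by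
  simp only [Fin.lt_def, runPos]; omega

lemma skipRun_lt_skipRun_iff (i i' : Fin m) : skipRun k g i < skipRun k g i' ↔ i < i' :=
  (strictMono_skipRun g).lt_iff_lt

lemma forall_val_le_iff_eq_zero : (∀ i : Fin m, (g : ℕ) ≤ i) ↔ g = 0 := by
  refine ⟨fun h => Fin.ext ?_, fun h i => by simp [h]⟩
  rw [Fin.val_zero]
  by_contra hg
  have := h ⟨0, by omega⟩
  simp only at this; omega

lemma exists_val_add_one_eq_iff_ne_zero : (∃ i : Fin m, (i : ℕ) + 1 = g) ↔ g ≠ 0 := by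
  refine ⟨fun ⟨i, hi⟩ h => by simp [h] at hi, fun h => ⟨⟨g - 1, by omega⟩, ?_⟩⟩
  have := Fin.pos_iff_ne_zero.2 h
  simp only [Fin.lt_def, Fin.val_zero] at this
  simp only; omega

lemma skipRun_add_one_eq_skipRun_iff (hk : 0 < k) (i i' : Fin m) :
    (skipRun k g i' : ℕ) + 1 = skipRun k g i ↔ (i : ℕ) ≠ g ∧ (i' : ℕ) + 1 = i := by
  simp only [skipRun_val]; split_ifs <;> omega

lemma skipRun_add_one_eq_runPos_iff (i : Fin m) (j : Fin k) :
    (skipRun k g i : ℕ) + 1 = runPos k g j ↔ (i : ℕ) + 1 = g ∧ (j : ℕ) = 0 := by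
  simp only [skipRun_val, runPos]; split_ifs <;> omega

lemma runPos_add_one_eq_skipRun_iff (i : Fin m) (j : Fin k) :
    (runPos k g j : ℕ) + 1 = skipRun k g i ↔ (i : ℕ) = g ∧ (j : ℕ) + 1 = k := by
  have := j.isLt
  simp only [skipRun_val, runPos]; split_ifs <;> omega

lemma runPos_add_one_eq_runPos_iff (j j' : Fin k) :
    (runPos k g j : ℕ) + 1 = runPos k g j' ↔ (j : ℕ) + 1 = j' := by
  simp only [runPos]; omega

end Adjacency

section Statistics

variable {α β : Type*} [LinearOrder α] [LinearOrder β] {m : ℕ}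

lemma ascCount_comp_of_strictMono {e : α → β} (he : StrictMono e) (f : Fin m → α) :
    ascCount (e ∘ f) = ascCount f := by
  simp [ascCount, ascFilter, he.lt_iff_lt]

lemma lrminCount_comp_of_strictMono {e : α → β} (he : StrictMono e) (f : Fin m → α) :
    lrminCount (e ∘ f) = lrminCount f := by
  simp [lrminCount, lrminFilter, he.lt_iff_lt]

lemma apCount_comp_of_strictMono {e : α → β} (he : StrictMono e) (f : Fin m → α) :
    apCount (e ∘ f) = apCount f := by
  simp [apCount, apFilter, he.lt_iff_lt, he.injective.eq_iff]

variable {k : ℕ} (f : Fin m → α) {N : α} (hN : ∀ i, f i < N) (g : Fin (m + 1))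
include hN

lemma runPos_mem_ascFilter_insertRun_one_iff (j : Fin 1) :
    runPos 1 g j ∈ ascFilter (insertRun 1 f N g) ↔ g ≠ 0 := by
  simp only [ascFilter, mem_filter, mem_univ, true_and]
  rw [exists_iff_runPos_or_skipRun g]
  simp [skipRun_add_one_eq_runPos_iff, runPos_add_one_eq_runPos_iff, hN,
    exists_val_add_one_eq_iff_ne_zero]

lemma skipRun_mem_ascFilter_insertRun_one_iff (i : Fin m) :
    skipRun 1 g i ∈ ascFilter (insertRun 1 f N g) ↔ (i : ℕ) ≠ g ∧ i ∈ ascFilter f := by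
  simp only [ascFilter, mem_filter, mem_univ, true_and]
  rw [exists_iff_runPos_or_skipRun g]
  simp [skipRun_add_one_eq_skipRun_iff, runPos_add_one_eq_skipRun_iff, (hN i).not_gt, and_assoc]

lemma runPos_mem_lrminFilter_insertRun_one_iff (j : Fin 1) :
    runPos 1 g j ∈ lrminFilter (insertRun 1 f N g) ↔ g = 0 := by
  simp only [lrminFilter, mem_filter, mem_univ, true_and]
  rw [forall_iff_runPos_and_skipRun g]
  simp [skipRun_lt_runPos_iff, runPos_lt_runPos_iff, (hN _).not_gt, forall_val_le_iff_eq_zero]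

lemma skipRun_mem_lrminFilter_insertRun_iff (i : Fin m) :
    skipRun k g i ∈ lrminFilter (insertRun k f N g) ↔ i ∈ lrminFilter f := by
  simp only [lrminFilter, mem_filter, mem_univ, true_and]
  rw [forall_iff_runPos_and_skipRun g]
  simp [skipRun_lt_skipRun_iff, hN]

lemma runPos_mem_apFilter_insertRun_two_iff (j : Fin 2) :
    runPos 2 g j ∈ apFilter (insertRun 2 f N g) ↔ g ≠ 0 ∧ j = 0 := by
  simp only [apFilter, mem_filter, mem_univ, true_and]
  simp only [exists_iff_runPos_or_skipRun g (k := 2)]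
  simp [skipRun_add_one_eq_runPos_iff, runPos_add_one_eq_runPos_iff, runPos_add_one_eq_skipRun_iff,
    hN, exists_val_add_one_eq_iff_ne_zero, (hN _).ne']

lemma skipRun_mem_apFilter_insertRun_two_iff (i : Fin m) :
    skipRun 2 g i ∈ apFilter (insertRun 2 f N g) ↔
      (i : ℕ) ≠ g ∧ (i : ℕ) + 1 ≠ g ∧ i ∈ apFilter f := by
  simp only [apFilter, mem_filter, mem_univ, true_and]
  simp only [exists_iff_runPos_or_skipRun g (k := 2)]
  simp only [runPos_add_one_eq_skipRun_iff, skipRun_add_one_eq_runPos_iff,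
    skipRun_add_one_eq_skipRun_iff g two_pos, insertRun_runPos, insertRun_skipRun, (hN _).not_gt,
    (hN _).ne, and_false, false_and, exists_false, false_or, or_false]
  grind

end Statistics

lemma card_filter_apply_eq {ι κ : Type*} [DecidableEq κ] (S : Finset ι) (e : ι ↪ κ)
    (c : κ) :
    (S.filter (e · = c)).card = if c ∈ S.map e then 1 else 0 := by
  split_ifs with hc
  · obtain ⟨a, ha, rfl⟩ := mem_map.1 hc
    rw [card_eq_one]
    exact ⟨a, by ext; simp [e.injective.eq_iff]; grind⟩
  · rw [card_eq_zero, filter_eq_empty_iff]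
    rintro a ha rfl
    exact hc (mem_map_of_mem e ha)

section Gaps

variable {α : Type*} [LinearOrder α] {m : ℕ} (f : Fin m → α)

/-- The gaps of `f` at which inserting a new maximum leaves the number of ascents unchanged: the
front, and the gap just before the top of each ascent. -/
def ascGaps : Finset (Fin (m + 1)) := insert 0 ((ascFilter f).map Fin.castSuccEmb)

/-- The gaps of `f` at which inserting a pair of new maxima leaves the number of ascent plateaus
unchanged: the front, and the two gaps around the first letter of each ascent plateau. -/
def apGaps : Finset (Fin (m + 1)) :=
  insert 0 ((apFilter f).map Fin.castSuccEmb ∪ (apFilter f).map (Fin.succEmb m))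

lemma zero_notMem_map_castSucc_ascFilter :
    (0 : Fin (m + 1)) ∉ (ascFilter f).map Fin.castSuccEmb := by
  simp only [mem_map, ascFilter, mem_filter, mem_univ, true_and, not_exists, not_and]
  rintro i ⟨j, hj, -⟩ h
  simp [Fin.ext_iff] at h; omega

lemma zero_notMem_map_castSucc_apFilter :
    (0 : Fin (m + 1)) ∉ (apFilter f).map Fin.castSuccEmb := by
  simp only [mem_map, apFilter, mem_filter, mem_univ, true_and, not_exists, not_and]
  rintro i ⟨j, -, hj, -⟩ h
  simp [Fin.ext_iff] at h; omega

lemma val_add_one_ne_of_mem_apFilter {i j : Fin m} (hi : i ∈ apFilter f) (hj : j ∈ apFilter f) :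
    (i : ℕ) + 1 ≠ j := by
  simp only [apFilter, mem_filter, mem_univ, true_and] at hi hj
  obtain ⟨-, k, -, hik, -, hfik⟩ := hi
  obtain ⟨l, -, hlj, -, hflj, -⟩ := hj
  intro hij
  obtain rfl : k = j := by ext; omega
  obtain rfl : l = i := by ext; omega
  exact hflj.ne hfik

lemma disjoint_map_castSucc_map_succ_apFilter :
    Disjoint ((apFilter f).map Fin.castSuccEmb) ((apFilter f).map (Fin.succEmb m)) := by
  rw [disjoint_left]
  intro c hc hc'
  obtain ⟨i, hi, rfl⟩ := mem_map.1 hc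
  obtain ⟨j, hj, hji⟩ := mem_map.1 hc'
  exact val_add_one_ne_of_mem_apFilter f hj hi (by simpa [Fin.ext_iff] using hji)

lemma zero_mem_ascGaps : 0 ∈ ascGaps f := mem_insert_self _ _

lemma card_ascGaps : (ascGaps f).card = ascCount f + 1 := by
  rw [ascGaps, card_insert_of_notMem (zero_notMem_map_castSucc_ascFilter f), card_map, ascCount]

lemma card_apGaps : (apGaps f).card = 2 * apCount f + 1 := by
  rw [apGaps, card_insert_of_notMem,
    card_union_of_disjoint (disjoint_map_castSucc_map_succ_apFilter f), card_map, card_map, apCount,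
    two_mul]
  simp [zero_notMem_map_castSucc_apFilter f, Fin.succ_ne_zero]

variable {N : α} (hN : ∀ i, f i < N) (g : Fin (m + 1))
include hN

lemma lrminCount_insertRun_one :
    lrminCount (insertRun 1 f N g) = lrminCount f + if g = 0 then 1 else 0 := by
  rw [lrminCount, card_eq_card_runPos_add_card_skipRun g, add_comm]
  simp only [runPos_mem_lrminFilter_insertRun_one_iff f hN,
    skipRun_mem_lrminFilter_insertRun_iff f hN]
  by_cases hg : g = 0 <;> simp [hg, lrminCount]

lemma ascCount_insertRun_one :
    ascCount (insertRun 1 f N g) = ascCount f + if g ∈ ascGaps f then 0 else 1 := by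
  have hrun : (univ.filter (runPos 1 g · ∈ ascFilter (insertRun 1 f N g))).card
      = if g = 0 then 0 else 1 := by
    simp only [runPos_mem_ascFilter_insertRun_one_iff f hN]
    by_cases hg : g = 0 <;> simp [hg]
  have hskip : (univ.filter (skipRun 1 g · ∈ ascFilter (insertRun 1 f N g))).card
      + (if g ∈ (ascFilter f).map Fin.castSuccEmb then 1 else 0) = ascCount f := by
    rw [← card_filter_apply_eq, ascCount, ← card_filter_add_card_filter_not (s := ascFilter f)
      (fun i => Fin.castSuccEmb i ≠ g)]
    simp only [skipRun_mem_ascFilter_insertRun_one_iff f hN, not_not]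
    congr 2
    ext i; simp [Fin.ext_iff, and_comm]
  rw [ascCount, card_eq_card_runPos_add_card_skipRun g, hrun, ← hskip, ascGaps]
  simp only [mem_insert]
  by_cases hg : g = 0
  · subst hg; simp [zero_notMem_map_castSucc_ascFilter f]
  by_cases hA : g ∈ (ascFilter f).map Fin.castSuccEmb
  · simp only [hg, hA, if_true, if_false, or_true]; omega
  · simp only [hg, hA, if_false, or_false]; omega

lemma apCount_insertRun_two :
    apCount (insertRun 2 f N g) = apCount f + if g ∈ apGaps f then 0 else 1 := by
  have hrun : (univ.filter (runPos 2 g · ∈ apFilter (insertRun 2 f N g))).card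
      = if g = 0 then 0 else 1 := by
    simp only [runPos_mem_apFilter_insertRun_two_iff f hN]
    by_cases hg : g = 0 <;> simp [hg, filter_eq']
  have hskip : (univ.filter (skipRun 2 g · ∈ apFilter (insertRun 2 f N g))).card
      + (if g ∈ (apFilter f).map Fin.castSuccEmb then 1 else 0)
      + (if g ∈ (apFilter f).map (Fin.succEmb m) then 1 else 0) = apCount f := by
    rw [← card_filter_apply_eq, ← card_filter_apply_eq, add_assoc, ← card_union_of_disjoint,
      ← filter_or, apCount, ← card_filter_add_card_filter_not (s := apFilter f)
      (fun i => Fin.castSuccEmb i ≠ g ∧ Fin.succEmb m i ≠ g)]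
    · simp only [skipRun_mem_apFilter_insertRun_two_iff f hN, not_and_or, not_not]
      congr 2
      ext i; simp [Fin.ext_iff]; tauto
    exact disjoint_filter.2 fun i _ h₁ h₂ => by simp [Fin.ext_iff] at h₁ h₂; omega
  rw [apCount, card_eq_card_runPos_add_card_skipRun g, hrun, ← hskip, apGaps]
  simp only [mem_insert, mem_union]
  by_cases hg : g = 0
  · subst hg; simp [zero_notMem_map_castSucc_apFilter f, Fin.succ_ne_zero]
  by_cases hA₁ : g ∈ (apFilter f).map Fin.castSuccEmb
  · have hA₂ := disjoint_left.1 (disjoint_map_castSucc_map_succ_apFilter f) hA₁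
    simp only [hg, hA₁, hA₂, if_true, if_false, true_or, or_true]; omega
  by_cases hA₂ : g ∈ (apFilter f).map (Fin.succEmb m)
  · simp only [hg, hA₁, hA₂, if_true, if_false, or_true]; omega
  · simp only [hg, hA₁, hA₂, if_false, or_false]; omega

end Gaps

noncomputable def insertionOp (n : ℕ) : ℤ[X] →ₗ[ℤ] ℤ[X] :=
  LinearMap.mulLeft ℤ (1 + 2 * (n : ℤ[X]) * X)
    + LinearMap.mulLeft ℤ (2 * X * (1 - X) : ℤ[X]) ∘ₗ derivative

lemma insertionOp_apply (n : ℕ) (P : ℤ[X]) :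
    insertionOp n P = (1 + 2 * (n : ℤ[X]) * X) * P + 2 * X * (1 - X) * derivative P := by
  simp [insertionOp, mul_assoc]

lemma insertionOp_X_pow (n c : ℕ) :
    insertionOp n (X ^ c) = (2 * c + 1 : ℤ[X]) * X ^ c + 2 * (n - c : ℤ[X]) * X ^ (c + 1) := by
  rw [insertionOp_apply, derivative_X_pow]
  rcases c with _ | c
  · simp
  · simp only [Nat.add_sub_cancel, Nat.cast_succ, map_add, map_one, map_natCast]; ring

lemma insertionOp_mul_C (n : ℕ) (P : ℤ[X]) (a : ℤ) :
    insertionOp n (P * C a) = insertionOp n P * C a := by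
  rw [mul_comm, ← smul_eq_C_mul, map_smul, smul_eq_C_mul, mul_comm]

lemma sum_pow_add_ite_mem {ι R : Type*} [Fintype ι] [DecidableEq ι] [CommSemiring R]
    (s : Finset ι) (x : R) (c : ℕ) :
    ∑ i, x ^ (c + if i ∈ s then 0 else 1) = s.card * x ^ c + sᶜ.card * x ^ (c + 1) := by
  have h₁ : ∑ i ∈ s, x ^ (c + if i ∈ s then 0 else 1) = ∑ i ∈ s, x ^ c :=
    sum_congr rfl fun i hi => by rw [if_pos hi, add_zero]
  have h₂ : ∑ i ∈ sᶜ, x ^ (c + if i ∈ s then 0 else 1) = ∑ i ∈ sᶜ, x ^ (c + 1) :=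
    sum_congr rfl fun i hi => by rw [if_neg (mem_compl.1 hi)]
  rw [← sum_add_sum_compl s, h₁, h₂, sum_const, sum_const, nsmul_eq_mul, nsmul_eq_mul]

section GapSums

variable {α : Type*} [LinearOrder α] {n : ℕ} {N : α}

lemma sum_X_pow_apCount_insertRun_two (f : Fin (2 * n) → α) (hN : ∀ i, f i < N) :
    ∑ g : Fin (2 * n + 1), (X : ℤ[X]) ^ apCount (insertRun 2 f N g)
      = insertionOp n (X ^ apCount f) := by
  have hcard := congrArg (Nat.cast : ℕ → ℤ[X]) (card_add_card_compl (apGaps f))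
  simp only [card_apGaps, Fintype.card_fin] at hcard
  push_cast at hcard
  simp only [apCount_insertRun_two f hN]
  rw [sum_pow_add_ite_mem, insertionOp_X_pow, card_apGaps]
  push_cast
  linear_combination X ^ (apCount f + 1) * hcard

lemma sum_X_pow_ascCount_insertRun_one (f : Fin n → α) (hN : ∀ i, f i < N) :
    ∑ g : Fin (n + 1), (X : ℤ[X]) ^ ascCount (insertRun 1 f N g)
        * 2 ^ (n + 1 - lrminCount (insertRun 1 f N g))
      = insertionOp n (X ^ ascCount f * 2 ^ (n - lrminCount f)) := by
  have hl : lrminCount f ≤ n := (card_le_univ _).trans (by simp)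
  have hterm : ∀ g : Fin (n + 1), (X : ℤ[X]) ^ ascCount (insertRun 1 f N g)
        * 2 ^ (n + 1 - lrminCount (insertRun 1 f N g))
      = 2 ^ (n - lrminCount f)
        * (2 * X ^ ascCount (insertRun 1 f N g) - if g = 0 then X ^ ascCount f else 0) := by
    intro g
    rw [lrminCount_insertRun_one f hN]
    by_cases hg : g = 0
    · subst hg
      rw [ascCount_insertRun_one f hN, if_pos (zero_mem_ascGaps f), if_pos rfl, if_pos rfl,
        Nat.add_sub_add_right]
      ring
    · rw [if_neg hg, if_neg hg, show n + 1 - (lrminCount f + 0) = n - lrminCount f + 1 by omega]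
      ring
  have hcard := congrArg (Nat.cast : ℕ → ℤ[X]) (card_add_card_compl (ascGaps f))
  simp only [card_ascGaps, Fintype.card_fin] at hcard
  push_cast at hcard
  rw [sum_congr rfl fun g _ => hterm g, ← mul_sum, sum_sub_distrib, ← mul_sum,
    sum_ite_eq' univ 0, if_pos (mem_univ _)]
  simp only [ascCount_insertRun_one f hN]
  rw [sum_pow_add_ite_mem,
    show (2 : ℤ[X]) ^ (n - lrminCount f) = C (2 ^ (n - lrminCount f)) by simp,
    insertionOp_mul_C, insertionOp_X_pow, card_ascGaps]
  push_cast
  linear_combination 2 * C (2 ^ (n - lrminCount f)) * X ^ (ascCount f + 1) * hcard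

end GapSums

section Permutations

open Equiv

variable {n : ℕ}

noncomputable def insertMax (π : Perm (Fin n)) (g : Fin (n + 1)) : Perm (Fin (n + 1)) :=
  .ofBijective (insertRun 1 (Fin.castSucc ∘ π) (Fin.last n) g) <|
    Finite.injective_iff_bijective.1 <|
      insertRun_one_injective (fun i => Fin.castSucc_ne_last (π i))
        ((Fin.castSucc_injective n).comp π.injective) g

lemma coe_insertMax (π : Perm (Fin n)) (g : Fin (n + 1)) :
    ⇑(insertMax π g) = insertRun 1 (Fin.castSucc ∘ π) (Fin.last n) g := rfl

lemma bijective_insertMax :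
    Function.Bijective fun p : Perm (Fin n) × Fin (n + 1) => insertMax p.1 p.2 := by
  rw [Fintype.bijective_iff_injective_and_card]
  refine ⟨fun ⟨π, g⟩ ⟨π', g'⟩ h => ?_,
    by simp [Fintype.card_perm, Nat.factorial_succ, mul_comm]⟩
  obtain ⟨hπ, rfl⟩ := insertRun_inj (f := Fin.castSucc ∘ π) (f' := Fin.castSucc ∘ π')
    (fun i => Fin.castSucc_ne_last (π i)) one_pos (fun i => Fin.castSucc_ne_last (π' i))
    (by simpa only [coe_insertMax] using congrArg DFunLike.coe h)
  exact Prod.ext (Equiv.ext fun i => Fin.castSucc_injective n (congrFun hπ i)) rfl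

lemma sum_perm_succ_eq_insertionOp :
    ∑ ρ : Perm (Fin (n + 1)), (X : ℤ[X]) ^ ascCount ρ * 2 ^ (n + 1 - lrminCount ρ)
      = insertionOp n (∑ π : Perm (Fin n), X ^ ascCount π * 2 ^ (n - lrminCount π)) := by
  rw [← Fintype.sum_bijective _ bijective_insertMax
    (fun p => (X : ℤ[X]) ^ ascCount (insertMax p.1 p.2)
      * 2 ^ (n + 1 - lrminCount (insertMax p.1 p.2)))
    _ fun _ => rfl, Fintype.sum_prod_type, map_sum]
  refine sum_congr rfl fun π _ => ?_
  simp only [coe_insertMax]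
  rw [← ascCount_comp_of_strictMono Fin.strictMono_castSucc π,
    ← lrminCount_comp_of_strictMono Fin.strictMono_castSucc π]
  exact sum_X_pow_ascCount_insertRun_one _ fun i => Fin.castSucc_lt_last _

end Permutations

section Stirling

def LargerBetweenEqual {β : Type*} [LinearOrder β] {M : ℕ} (w : Fin M → β) : Prop :=
  ∀ p q r : Fin M, p < q → q < r → w p = w r → w p < w q

variable {β : Type*} [LinearOrder β] {m : ℕ}

lemma largerBetweenEqual_comp_iff {γ : Type*} [LinearOrder γ] {e : β → γ} (he : StrictMono e)
    {w : Fin m → β} : LargerBetweenEqual (e ∘ w) ↔ LargerBetweenEqual w := by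
  simp [LargerBetweenEqual, he.lt_iff_lt, he.injective.eq_iff]

lemma largerBetweenEqual_insertRun_two_iff {f : Fin m → β} {N : β} (hN : ∀ i, f i < N)
    (g : Fin (m + 1)) : LargerBetweenEqual (insertRun 2 f N g) ↔ LargerBetweenEqual f := by
  have hsm := strictMono_skipRun (k := 2) g
  refine ⟨fun h p q r hpq hqr hpr => ?_, fun h p q r hpq hqr hpr => ?_⟩
  · simpa using h _ _ _ (hsm hpq) (hsm hqr) (by simpa using hpr)
  obtain ⟨j, rfl⟩ | ⟨i, rfl⟩ := eq_runPos_or_eq_skipRun g p <;>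
    obtain ⟨j', rfl⟩ | ⟨i', rfl⟩ := eq_runPos_or_eq_skipRun g r
  · have := j.isLt; have := j'.isLt
    simp only [Fin.lt_def, runPos] at hpq hqr; omega
  · exact absurd hpr (by simpa using (hN i').ne')
  · exact absurd hpr (by simpa using (hN i).ne)
  · obtain ⟨j'', rfl⟩ | ⟨i'', rfl⟩ := eq_runPos_or_eq_skipRun g q
    · simpa using hN i
    · simp only [insertRun_skipRun] at hpr ⊢
      exact h _ _ _ (hsm.lt_iff_lt.1 hpq) (hsm.lt_iff_lt.1 hqr) hpr

/-- Nothing fits strictly between two copies of the largest letter, so they are adjacent. -/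
lemma exists_run_of_card_filter_eq_two {w : Fin (m + 2) → β} {v : β} (hv : ∀ p, w p ≤ v)
    (hw : LargerBetweenEqual w) (hcard : (univ.filter (w · = v)).card = 2) :
    ∃ g : Fin (m + 1), ∀ p, w p = v ↔ (g : ℕ) ≤ p ∧ (p : ℕ) < g + 2 := by
  set S := univ.filter (w · = v)
  have hS : S.Nonempty := card_pos.1 (by omega)
  set u := S.min' hS
  have hu : w u = v := (mem_filter.1 (S.min'_mem hS)).2
  have hlt : ∀ p, w p = v → (p : ℕ) < u + 2 := by
    intro p hp
    by_contra hge
    exact (hw u ⟨u + 1, by omega⟩ p (by simp [Fin.lt_def]) (by simp [Fin.lt_def]; omega)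
      (hu.trans hp.symm)).not_ge ((hv _).trans hu.ge)
  obtain ⟨x, hxS, hxu⟩ := exists_mem_ne (by omega : 1 < S.card) u
  have hx : (x : ℕ) = u + 1 := by
    have := Fin.le_def.1 (S.min'_le x hxS)
    have := hlt x (mem_filter.1 hxS).2
    have := Fin.val_ne_of_ne hxu
    omega
  refine ⟨⟨u, by omega⟩, fun p =>
    ⟨fun hp => ⟨Fin.le_def.1 (S.min'_le p (by simpa [S])), hlt p hp⟩,
      fun ⟨h₁, h₂⟩ => ?_⟩⟩
  dsimp only at h₁ h₂
  obtain h | h : (p : ℕ) = u ∨ (p : ℕ) = x := by omega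
  · rwa [Fin.ext h]
  · rw [Fin.ext h]; exact (mem_filter.1 hxS).2

end Stirling

section StirlingPermutations

variable {n : ℕ}

lemma isStirling_insertRun_two_iff (σ : Fin (2 * n) → Fin n) (g : Fin (2 * n + 1)) :
    IsStirling (n + 1) (insertRun 2 (Fin.castSucc ∘ σ) (Fin.last n) g) ↔ IsStirling n σ := by
  refine and_congr ?_ ((largerBetweenEqual_insertRun_two_iff (f := Fin.castSucc ∘ σ)
    (fun i => Fin.castSucc_lt_last _) g).trans
      (largerBetweenEqual_comp_iff Fin.strictMono_castSucc))
  change (∀ k : Fin (n + 1), (univ.filter fun p : Fin (2 * n + 2) => _ = k).card = 2) ↔ _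
  rw [Fin.forall_fin_succ']
  simp only [card_filter_insertRun_eq (f := Fin.castSucc ∘ σ)
    (fun i => Fin.castSucc_ne_last (σ i))]
  simp

lemma exists_eq_insertRun_of_isStirling {τ : Fin (2 * (n + 1)) → Fin (n + 1)}
    (hτ : IsStirling (n + 1) τ) :
    ∃ (σ : Fin (2 * n) → Fin n) (g : Fin (2 * n + 1)),
      τ = insertRun 2 (Fin.castSucc ∘ σ) (Fin.last n) g := by
  obtain ⟨g, hg⟩ := exists_run_of_card_filter_eq_two (m := 2 * n) (w := τ)
    (fun _ => Fin.le_last _) hτ.2 (hτ.1 _)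
  have hne : ∀ i : Fin (2 * n), τ (skipRun 2 g i) ≠ Fin.last n := fun i h => by
    have := (hg _).1 h
    simp only [skipRun_val] at this
    split_ifs at this <;> omega
  exact ⟨fun i => (τ (skipRun 2 g i)).castPred (hne i), g, eq_insertRun_of_eq_iff g τ hg⟩

lemma sum_stirlingFinset_succ_eq_insertionOp :
    ∑ τ ∈ stirlingFinset (n + 1), (X : ℤ[X]) ^ apCount τ
      = insertionOp n (∑ σ ∈ stirlingFinset n, X ^ apCount σ) := by
  have hgaps : ∀ σ : Fin (2 * n) → Fin n, insertionOp n (X ^ apCount σ)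
      = ∑ g, X ^ apCount (insertRun 2 (Fin.castSucc ∘ σ) (Fin.last n) g) := fun σ => by
    rw [sum_X_pow_apCount_insertRun_two (Fin.castSucc ∘ σ) fun i => Fin.castSucc_lt_last _,
      apCount_comp_of_strictMono Fin.strictMono_castSucc]
  rw [map_sum, sum_congr rfl fun σ _ => hgaps σ, ← sum_product']
  symm
  refine sum_bij (fun p _ => insertRun 2 (Fin.castSucc ∘ p.1) (Fin.last n) p.2) ?_ ?_ ?_
    fun _ _ => rfl
  · rintro ⟨σ, g⟩ h
    exact mem_filter.2 ⟨mem_univ _,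
      (isStirling_insertRun_two_iff σ g).2 (mem_filter.1 (mem_product.1 h).1).2⟩
  · rintro ⟨σ, g⟩ - ⟨σ', g'⟩ - h
    obtain ⟨hσ, rfl⟩ := insertRun_inj (f := Fin.castSucc ∘ σ) (f' := Fin.castSucc ∘ σ')
      (fun i => Fin.castSucc_ne_last (σ i)) two_pos (fun i => Fin.castSucc_ne_last (σ' i)) h
    exact Prod.ext (funext fun i => Fin.castSucc_injective n (congrFun hσ i)) rfl
  · intro τ hτ
    obtain ⟨σ, g, rfl⟩ := exists_eq_insertRun_of_isStirling (mem_filter.1 hτ).2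
    exact ⟨(σ, g), mem_product.2 ⟨mem_filter.2 ⟨mem_univ _,
      (isStirling_insertRun_two_iff σ g).1 (mem_filter.1 hτ).2⟩, mem_univ _⟩, rfl⟩

end StirlingPermutations

theorem stmt_11_general (n : ℕ) :
    ∑ σ ∈ stirlingFinset n, (Polynomial.X : Polynomial ℤ) ^ apCount σ
      = ∑ π : Equiv.Perm (Fin n),
          (Polynomial.X : Polynomial ℤ) ^ ascCount ⇑π * 2 ^ (n - lrminCount ⇑π) := by
  induction n with
  | zero =>
    have hS : stirlingFinset 0 = univ :=
      filter_true_of_mem fun σ _ => ⟨fun k => k.elim0, fun p => p.elim0⟩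
    have hap : ∀ σ : Fin (2 * 0) → Fin 0, apFilter σ = ∅ :=
      fun σ => eq_empty_of_forall_notMem (·.elim0)
    simp [hS, apCount, ascCount, hap, Subsingleton.elim (ascFilter _) ∅]
  | succ n ih => rw [sum_stirlingFinset_succ_eq_insertionOp, sum_perm_succ_eq_insertionOp, ih]

/-- identity in ℤ[x]. -/
theorem stmt_11 (n : ℕ) (hn : 1 ≤ n) :
    ∑ σ ∈ stirlingFinset n, (Polynomial.X : Polynomial ℤ) ^ apCount σ
      = ∑ π : Equiv.Perm (Fin n),
          (Polynomial.X : Polynomial ℤ) ^ ascCount ⇑π * 2 ^ (n - lrminCount ⇑π) :=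
  stmt_11_general n
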